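/- If M is a compact positively invariant and locally accessible set for a control-affine system, then M contains at least one and at most finitely many invariant control sets; each is compact, has nonempty interior, and for every x ∈ M there is an invariant control set C with int C ∩ O⁺_pc(x) ≠ ∅, where O⁺_pc(x) is the set of points reachable from x by piecewise constant controls. -/

import Mathlib

/-!
Trajectories depend continuously on the initial state (Grönwall), so `y ∈ cl O⁺(x)` implies
`cl O⁺(y) ⊆ cl O⁺(x)`. Inside a compact positively invariant `M`, Zorn's lemma applied to the
orbit closures `cl O⁺(z)` gives below every `cl O⁺(x)` a minimal set `A`, i.e. `cl O⁺(a) = A`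
for all `a ∈ A`, and local accessibility gives `A` nonempty interior. The minimal sets in `M` are
exactly its invariant control sets: a minimal set reachable from a point of the closure of an
invariant control set `C` meets `C` through its interior and therefore equals `cl C = C`.
The open sets `{x | O⁺(x) meets int A}` cover `M`, and distinct minimal sets are disjoint, so
compactness leaves only finitely many of them. Finally piecewise constant controls are L¹-dense
among the admissible ones, so by the Grönwall estimate `O⁺_pc(x)` is dense in `O⁺(x)`.
-/

open MeasureTheory Set Topology

/-- A control-affine system `ẋ = f₀(x) + ∑ vᵢ(t) fᵢ(x)` on `ℝ^d` with Lipschitz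
continuous vector fields and compact control range `V ⊆ ℝ^m`.  The (unique, global)
solutions are bundled as the data `φ` together with their defining properties. -/
structure CAS (d m : ℕ) where
  /-- the drift vector field -/
  f0 : (Fin d → ℝ) → (Fin d → ℝ)
  /-- the control vector fields -/
  f : Fin m → (Fin d → ℝ) → (Fin d → ℝ)
  /-- the control range -/
  V : Set (Fin m → ℝ)
  lip0 : ∃ K, LipschitzWith K f0
  lip : ∀ i, ∃ K, LipschitzWith K (f i)
  V_compact : IsCompact V
  /-- the solution map: `φ x v t` is the solution at time `t` starting at `x` with control `v` -/
  φ : (Fin d → ℝ) → (ℝ → (Fin m → ℝ)) → ℝ → (Fin d → ℝ)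
  φ_init : ∀ x v, φ x v 0 = x
  φ_cont : ∀ x v, Continuous (φ x v)
  /-- solutions are (Carathéodory) solutions of the ODE -/
  φ_sol : ∀ (x : Fin d → ℝ) (v : ℝ → (Fin m → ℝ)), Measurable v → (∀ t, v t ∈ V) →
    ∀ t, 0 ≤ t →
      φ x v t = x + ∫ s in (0:ℝ)..t, (f0 (φ x v s) + ∑ i, v s i • f (i) (φ x v s))

namespace CAS

variable {d m : ℕ}

/-- the set of admissible controls -/
def ctrl (S : CAS d m) : Set (ℝ → (Fin m → ℝ)) :=
  {v | Measurable v ∧ ∀ t, v t ∈ S.V}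

/-- a control is piecewise constant if it has only finitely many discontinuities on
every bounded interval, i.e. it is constant between the members of a sequence of
switching times tending to infinity -/
def PiecewiseConst (v : ℝ → (Fin m → ℝ)) : Prop :=
  ∃ τ : ℕ → ℝ, τ 0 = 0 ∧ StrictMono τ ∧ Filter.Tendsto τ Filter.atTop Filter.atTop ∧
    ∀ n, ∀ t ∈ Ico (τ n) (τ (n + 1)), v t = v (τ n)

/-- the reachable set from `x` -/
def reach (S : CAS d m) (x : Fin d → ℝ) : Set (Fin d → ℝ) :=
  {y | ∃ v ∈ S.ctrl, ∃ t ≥ (0:ℝ), S.φ x v t = y}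

/-- the set reachable from `x` with piecewise constant controls -/
def reachPC (S : CAS d m) (x : Fin d → ℝ) : Set (Fin d → ℝ) :=
  {y | ∃ v ∈ S.ctrl, PiecewiseConst v ∧ ∃ t ≥ (0:ℝ), S.φ x v t = y}

/-- the reachable set from `x` up to time `T` -/
def reachLe (S : CAS d m) (T : ℝ) (x : Fin d → ℝ) : Set (Fin d → ℝ) :=
  {y | ∃ v ∈ S.ctrl, ∃ t ∈ Icc (0:ℝ) T, S.φ x v t = y}

/-- the controllable set to `x` up to time `T` -/
def contrLe (S : CAS d m) (T : ℝ) (x : Fin d → ℝ) : Set (Fin d → ℝ) :=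
  {y | ∃ v ∈ S.ctrl, ∃ t ∈ Icc (0:ℝ) T, S.φ y v t = x}

/-- positive invariance of a set -/
def posInv (S : CAS d m) (M : Set (Fin d → ℝ)) : Prop :=
  ∀ x ∈ M, ∀ v ∈ S.ctrl, ∀ t ≥ (0:ℝ), S.φ x v t ∈ M

/-- invariance of a set -/
def inv (S : CAS d m) (M : Set (Fin d → ℝ)) : Prop :=
  ∀ t ≥ (0:ℝ), {y | ∃ x ∈ M, ∃ v ∈ S.ctrl, S.φ x v t = y} = M

/-- the two defining properties (i) controlled invariance and (ii) approximate
reachability of a control set -/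
def controlSetProps (S : CAS d m) (D : Set (Fin d → ℝ)) : Prop :=
  (∀ x ∈ D, ∃ v ∈ S.ctrl, ∀ t ≥ (0:ℝ), S.φ x v t ∈ D) ∧
  (∀ x ∈ D, D ⊆ closure (S.reach x))

/-- a control set: a maximal nonempty set with the properties `controlSetProps` -/
def isControlSet (S : CAS d m) (D : Set (Fin d → ℝ)) : Prop :=
  D.Nonempty ∧ S.controlSetProps D ∧
  ∀ D', D ⊆ D' → S.controlSetProps D' → D' = D

/-- an invariant control set -/
def isInvControlSet (S : CAS d m) (C : Set (Fin d → ℝ)) : Prop :=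
  S.isControlSet C ∧ ∀ x ∈ C, closure C = closure (S.reach x)

/-- local accessibility at a point -/
def locAccAt (S : CAS d m) (x : Fin d → ℝ) : Prop :=
  ∀ T > (0:ℝ), ∀ N ∈ 𝓝 x,
    (interior (S.reachLe T x) ∩ N).Nonempty ∧ (interior (S.contrLe T x) ∩ N).Nonempty

/-- local accessibility on a set -/
def locAccOn (S : CAS d m) (M : Set (Fin d → ℝ)) : Prop :=
  ∀ x ∈ M, S.locAccAt x

/-- the domain of attraction of a set -/
def domAttr (S : CAS d m) (C : Set (Fin d → ℝ)) : Set (Fin d → ℝ) :=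
  {x | (closure (S.reach x) ∩ C).Nonempty}

/-- the strict domain of attraction of an invariant control set -/
def domAttrStrict (S : CAS d m) (C : Set (Fin d → ℝ)) : Set (Fin d → ℝ) :=
  {x | (closure (S.reach x) ∩ C).Nonempty ∧
    ∀ C', S.isInvControlSet C' → (closure (S.reach x) ∩ C').Nonempty → C' = C}

end CAS

open scoped NNReal

theorem le_mul_exp_of_le_add_mul_integral {g : ℝ → ℝ} {A L T : ℝ} (hL : 0 ≤ L)
    (hg : Continuous g) (hg0 : ∀ t, 0 ≤ g t)
    (h : ∀ t ∈ Icc (0:ℝ) T, g t ≤ A + L * ∫ s in (0:ℝ)..t, g s) :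
    ∀ t ∈ Icc (0:ℝ) T, g t ≤ A * Real.exp (L * t) := by
  intro t ht
  -- `H = A + L ∫₀ᵗ g` satisfies `H' = L g ≤ L H`, so the differential Grönwall bound applies.
  set H : ℝ → ℝ := fun t => A + L * ∫ s in (0:ℝ)..t, g s
  have hH : ∀ t, HasDerivAt H (L * g t) t := fun t =>
    ((hg.integral_hasStrictDerivAt 0 t).hasDerivAt.const_mul L).const_add A
  have hA : 0 ≤ A := by
    simpa [H] using (hg0 0).trans (h 0 ⟨le_rfl, ht.1.trans ht.2⟩)
  have hH0 : ∀ t ∈ Icc (0:ℝ) T, 0 ≤ H t := fun t ht =>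
    add_nonneg hA (mul_nonneg hL (intervalIntegral.integral_nonneg ht.1 fun s _ => hg0 s))
  have hbound := norm_le_gronwallBound_of_norm_deriv_right_le (δ := A) (ε := 0)
    (fun t _ => (hH t).continuousAt.continuousWithinAt)
    (fun t _ => (hH t).hasDerivWithinAt) (by simp [H, abs_of_nonneg hA])
    (fun s hs => by
      rw [Real.norm_of_nonneg (mul_nonneg hL (hg0 s)),
        Real.norm_of_nonneg (hH0 s (Ico_subset_Icc_self hs)), add_zero]
      exact mul_le_mul_of_nonneg_left (h s (Ico_subset_Icc_self hs)) hL) t ht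
  rw [Real.norm_of_nonneg (hH0 t ht), sub_zero, gronwallBound_ε0] at hbound
  exact (h t ht).trans hbound

theorem LipschitzWith.finset_sum {α ι E : Type*} [PseudoEMetricSpace α]
    [SeminormedAddCommGroup E] (s : Finset ι) {K : ι → ℝ≥0} {f : ι → α → E}
    (hf : ∀ i ∈ s, LipschitzWith (K i) (f i)) :
    LipschitzWith (∑ i ∈ s, K i) fun x => ∑ i ∈ s, f i x := by
  classical
  induction s using Finset.induction_on with
  | empty => simpa using LipschitzWith.const (0 : E)
  | insert i s hi ih =>
    simp only [Finset.sum_insert hi]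
    exact (hf i (Finset.mem_insert_self i s)).add
      (ih fun j hj => hf j (Finset.mem_insert_of_mem hj))

theorem intervalIntegrable_of_isCompact_range_subset {E : Type*} [NormedAddCommGroup E]
    [MeasurableSpace E] [OpensMeasurableSpace E] [SecondCountableTopology E]
    {V : Set E} (hV : IsCompact V) {v : ℝ → E} (hv : Measurable v) (hvV : ∀ t, v t ∈ V)
    (a b : ℝ) : IntervalIntegrable v volume a b := by
  obtain ⟨C, hC⟩ := hV.isBounded.exists_norm_le
  exact IntervalIntegrable.mono_fun' (g := fun _ => C) intervalIntegrable_const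
    hv.aestronglyMeasurable (Filter.Eventually.of_forall fun t => hC _ (hvV t))

theorem dist_mul_floor_div_lt {h : ℝ} (hh : 0 < h) (s : ℝ) : dist s (h * ⌊s / h⌋) < h := by
  have : s - h * ⌊s / h⌋ = h * Int.fract (s / h) := by
    rw [Int.fract, mul_sub, mul_div_cancel₀ _ hh.ne']
  rw [Real.dist_eq, this, abs_of_nonneg (mul_nonneg hh.le (Int.fract_nonneg _))]
  exact mul_lt_of_lt_one_right hh (Int.fract_lt_one _)

theorem dist_le_two_mul_dist_of_forall_dist_le {X : Type*} [PseudoMetricSpace X] {V : Set X}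
    {y p c : X} (hp : ∀ c' ∈ V, dist y p ≤ dist y c') (hc : c ∈ V) : dist c p ≤ 2 * dist c y :=
  calc dist c p ≤ dist c y + dist y p := dist_triangle _ _ _
    _ ≤ dist c y + dist y c := add_le_add le_rfl (hp c hc)
    _ = 2 * dist c y := by rw [dist_comm y c]; ring

namespace CAS

variable {d m : ℕ} (S : CAS d m)

def field (c : Fin m → ℝ) (x : Fin d → ℝ) : Fin d → ℝ :=
  S.f0 x + ∑ i, c i • S.f i x

def IsSolutionOn (v : ℝ → Fin m → ℝ) (ψ : ℝ → Fin d → ℝ) (T : ℝ) : Prop :=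
  ∀ t ∈ Icc (0:ℝ) T, ψ t = ψ 0 + ∫ s in (0:ℝ)..t, S.field (v s) (ψ s)

theorem continuous_f0 : Continuous S.f0 :=
  S.lip0.choose_spec.continuous

theorem continuous_f (i : Fin m) : Continuous (S.f i) :=
  (S.lip i).choose_spec.continuous

theorem continuous_field : Continuous fun p : (Fin m → ℝ) × (Fin d → ℝ) => S.field p.1 p.2 := by
  have := S.continuous_f0
  have := S.continuous_f
  unfold field
  fun_prop

theorem exists_lipschitzWith_field : ∃ K : ℝ≥0, ∀ c ∈ S.V, LipschitzWith K (S.field c) := by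
  obtain ⟨K₀, hK₀⟩ := S.lip0
  choose K hK using S.lip
  obtain ⟨B, hB⟩ := S.V_compact.isBounded.exists_norm_le
  refine ⟨K₀ + ∑ i, B.toNNReal * K i, fun c hc => hK₀.add (LipschitzWith.finset_sum _ ?_)⟩
  intro i _
  refine ((lipschitzWith_smul (c i)).comp (hK i)).weaken (mul_le_mul_left ?_ _)
  rw [← NNReal.coe_le_coe, coe_nnnorm]
  exact (norm_le_pi_norm c i).trans ((hB c hc).trans (Real.le_coe_toNNReal B))

theorem norm_field_sub_field_le (c c' : Fin m → ℝ) (x : Fin d → ℝ) :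
    ‖S.field c x - S.field c' x‖ ≤ ‖c - c'‖ * ∑ i, ‖S.f i x‖ := by
  have : S.field c x - S.field c' x = ∑ i, (c - c') i • S.f i x := by
    simp only [field, Pi.sub_apply, sub_smul, Finset.sum_sub_distrib]
    abel
  rw [this, Finset.mul_sum]
  refine (norm_sum_le _ _).trans (Finset.sum_le_sum fun i _ => ?_)
  rw [norm_smul]
  exact mul_le_mul_of_nonneg_right (norm_le_pi_norm _ i) (norm_nonneg _)

variable {S}

theorem intervalIntegrable_of_mem_ctrl {v : ℝ → Fin m → ℝ} (hv : v ∈ S.ctrl) (a b : ℝ) :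
    IntervalIntegrable v volume a b :=
  intervalIntegrable_of_isCompact_range_subset S.V_compact hv.1 hv.2 a b

theorem intervalIntegrable_field {v : ℝ → Fin m → ℝ} (hv : v ∈ S.ctrl)
    {ψ : ℝ → Fin d → ℝ} (hψ : Continuous ψ) (a b : ℝ) :
    IntervalIntegrable (fun s => S.field (v s) (ψ s)) volume a b := by
  have hK : IsCompact (S.V ×ˢ (ψ '' uIcc a b)) :=
    S.V_compact.prod (isCompact_uIcc.image hψ)
  obtain ⟨C, hC⟩ := hK.exists_bound_of_continuousOn S.continuous_field.continuousOn
  refine IntervalIntegrable.mono_fun' (g := fun _ => C) intervalIntegrable_const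
    (S.continuous_field.measurable.comp (hv.1.prodMk hψ.measurable)).aestronglyMeasurable ?_
  refine (ae_restrict_mem measurableSet_uIoc).mono fun s hs => ?_
  exact hC (v s, ψ s) ⟨hv.2 s, mem_image_of_mem ψ (uIoc_subset_uIcc hs)⟩

theorem isSolutionOn_φ {v : ℝ → Fin m → ℝ} (hv : v ∈ S.ctrl) (x : Fin d → ℝ) (T : ℝ) :
    S.IsSolutionOn v (S.φ x v) T := fun t ht => by
  rw [S.φ_init]
  exact S.φ_sol x v hv.1 hv.2 t ht.1

theorem shift_mem_ctrl {v : ℝ → Fin m → ℝ} (hv : v ∈ S.ctrl) (s : ℝ) :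
    (fun r => v (s + r)) ∈ S.ctrl :=
  ⟨hv.1.comp (measurable_const_add s), fun r => hv.2 (s + r)⟩

theorem IsSolutionOn.comp_add {v : ℝ → Fin m → ℝ} (hv : v ∈ S.ctrl) {ψ : ℝ → Fin d → ℝ}
    (hψ : Continuous ψ) {s T : ℝ} (hs : 0 ≤ s) (h : S.IsSolutionOn v ψ (s + T)) :
    S.IsSolutionOn (fun r => v (s + r)) (fun r => ψ (s + r)) T := by
  intro t ht
  have hF := intervalIntegrable_field hv hψ
  have hst := h (s + t) ⟨by linarith [ht.1], by linarith [ht.2]⟩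
  have hs' := h s ⟨hs, by linarith [ht.1, ht.2]⟩
  simp only [add_zero]
  rw [intervalIntegral.integral_comp_add_left (fun r => S.field (v r) (ψ r)), add_zero,
    ← intervalIntegral.integral_interval_sub_left (hF 0 (s + t)) (hF 0 s), hst, hs']
  abel

theorem norm_sub_le_of_isSolutionOn {K : ℝ≥0} (hK : ∀ c ∈ S.V, LipschitzWith K (S.field c))
    {v w : ℝ → Fin m → ℝ} (hv : v ∈ S.ctrl) (hw : w ∈ S.ctrl) {ψ₁ ψ₂ : ℝ → Fin d → ℝ}
    (hψ₁ : Continuous ψ₁) (hψ₂ : Continuous ψ₂) {T : ℝ}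
    (h₁ : S.IsSolutionOn v ψ₁ T) (h₂ : S.IsSolutionOn w ψ₂ T) :
    ∀ t ∈ Icc (0:ℝ) T, ‖ψ₁ t - ψ₂ t‖ ≤ (‖ψ₁ 0 - ψ₂ 0‖ +
      ∫ s in (0:ℝ)..T, ‖S.field (v s) (ψ₂ s) - S.field (w s) (ψ₂ s)‖) * Real.exp (K * t) := by
  have hF₁ := intervalIntegrable_field hv hψ₁
  have hF₂ := intervalIntegrable_field hw hψ₂
  have hD : ∀ a b, IntervalIntegrable
      (fun s => ‖S.field (v s) (ψ₂ s) - S.field (w s) (ψ₂ s)‖) volume a b := fun a b =>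
    ((intervalIntegrable_field hv hψ₂ a b).sub (hF₂ a b)).norm
  have hg : Continuous fun t => ‖ψ₁ t - ψ₂ t‖ := (hψ₁.sub hψ₂).norm
  refine le_mul_exp_of_le_add_mul_integral K.coe_nonneg hg (fun t => norm_nonneg _) ?_
  intro t ht
  have hsplit : ∀ s, ‖S.field (v s) (ψ₁ s) - S.field (w s) (ψ₂ s)‖ ≤
      K * ‖ψ₁ s - ψ₂ s‖ + ‖S.field (v s) (ψ₂ s) - S.field (w s) (ψ₂ s)‖ := fun s => by
    rw [← sub_add_sub_cancel _ (S.field (v s) (ψ₂ s))]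
    exact (norm_add_le _ _).trans (add_le_add ((hK _ (hv.2 s)).norm_sub_le _ _) le_rfl)
  have hdefect_mono : ∫ s in (0:ℝ)..t, ‖S.field (v s) (ψ₂ s) - S.field (w s) (ψ₂ s)‖ ≤
      ∫ s in (0:ℝ)..T, ‖S.field (v s) (ψ₂ s) - S.field (w s) (ψ₂ s)‖ :=
    intervalIntegral.integral_mono_interval le_rfl ht.1 ht.2
      (Filter.Eventually.of_forall fun s => norm_nonneg _) (hD 0 T)
  have hdiff : ψ₁ t - ψ₂ t = (ψ₁ 0 - ψ₂ 0) +
      ∫ s in (0:ℝ)..t, (S.field (v s) (ψ₁ s) - S.field (w s) (ψ₂ s)) := by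
    rw [intervalIntegral.integral_sub (hF₁ 0 t) (hF₂ 0 t)]
    conv_lhs => rw [h₁ t ht, h₂ t ht]
    abel
  rw [hdiff]
  refine (norm_add_le _ _).trans ?_
  have := (intervalIntegral.norm_integral_le_integral_norm ht.1).trans
    (intervalIntegral.integral_mono_on ht.1 ((hF₁ 0 t).sub (hF₂ 0 t)).norm
      (((hg.intervalIntegrable 0 t).const_mul _).add (hD 0 t)) fun s _ => hsplit s)
  rw [intervalIntegral.integral_add ((hg.intervalIntegrable 0 t).const_mul _) (hD 0 t),
    intervalIntegral.integral_const_mul] at this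
  linarith

theorem continuous_φ_apply {v : ℝ → Fin m → ℝ} (hv : v ∈ S.ctrl) {t : ℝ} (ht : 0 ≤ t) :
    Continuous fun x => S.φ x v t := by
  obtain ⟨K, hK⟩ := S.exists_lipschitzWith_field
  refine (LipschitzWith.of_dist_le_mul fun x y => ?_).continuous
    (K := (Real.exp (K * t)).toNNReal)
  have := norm_sub_le_of_isSolutionOn hK hv hv (S.φ_cont x v) (S.φ_cont y v)
    (isSolutionOn_φ hv x t) (isSolutionOn_φ hv y t) t ⟨ht, le_rfl⟩
  simpa [S.φ_init, dist_eq_norm, mul_comm, (Real.exp_pos _).le] using this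

theorem IsSolutionOn.eqOn {v w : ℝ → Fin m → ℝ} (hv : v ∈ S.ctrl) (hw : w ∈ S.ctrl)
    {ψ₁ ψ₂ : ℝ → Fin d → ℝ} (hψ₁ : Continuous ψ₁) (hψ₂ : Continuous ψ₂) {T : ℝ}
    (h₁ : S.IsSolutionOn v ψ₁ T) (h₂ : S.IsSolutionOn w ψ₂ T) (h₀ : ψ₁ 0 = ψ₂ 0)
    (hvw : EqOn v w (Ioo 0 T)) : EqOn ψ₁ ψ₂ (Icc 0 T) := by
  obtain ⟨K, hK⟩ := S.exists_lipschitzWith_field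
  intro t ht
  have hdefect : ∫ s in (0:ℝ)..T, ‖S.field (v s) (ψ₂ s) - S.field (w s) (ψ₂ s)‖ = 0 := by
    rw [intervalIntegral.integral_of_le (ht.1.trans ht.2), integral_Ioc_eq_integral_Ioo]
    exact setIntegral_eq_zero_of_forall_eq_zero fun s hs => by simp [hvw hs]
  have := norm_sub_le_of_isSolutionOn hK hv hw hψ₁ hψ₂ h₁ h₂ t ht
  rw [h₀, hdefect, sub_self, norm_zero, zero_add, zero_mul] at this
  exact sub_eq_zero.1 (norm_le_zero_iff.1 this)

theorem φ_eq_of_eqOn {v w : ℝ → Fin m → ℝ} (hv : v ∈ S.ctrl) (hw : w ∈ S.ctrl)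
    (x : Fin d → ℝ) {T : ℝ} (hvw : EqOn v w (Ioo 0 T)) {t : ℝ} (ht : t ∈ Icc 0 T) :
    S.φ x v t = S.φ x w t :=
  IsSolutionOn.eqOn hv hw (S.φ_cont x v) (S.φ_cont x w) (isSolutionOn_φ hv x T)
    (isSolutionOn_φ hw x T) (by rw [S.φ_init, S.φ_init]) hvw ht

theorem φ_add {v : ℝ → Fin m → ℝ} (hv : v ∈ S.ctrl) (x : Fin d → ℝ) {s t : ℝ}
    (hs : 0 ≤ s) (ht : 0 ≤ t) :
    S.φ x v (s + t) = S.φ (S.φ x v s) (fun r => v (s + r)) t := by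
  have hψ : Continuous fun r => S.φ x v (s + r) := (S.φ_cont x v).comp (continuous_const_add s)
  refine IsSolutionOn.eqOn (shift_mem_ctrl hv s) (shift_mem_ctrl hv s) hψ (S.φ_cont _ _)
    ((isSolutionOn_φ hv x (s + t)).comp_add hv (S.φ_cont x v) hs)
    (isSolutionOn_φ (shift_mem_ctrl hv s) _ t) (by simp [S.φ_init]) (fun _ _ => rfl)
    ⟨ht, le_rfl⟩

theorem piecewise_mem_ctrl {v w : ℝ → Fin m → ℝ} (hv : v ∈ S.ctrl) (hw : w ∈ S.ctrl) (s : ℝ) :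
    (fun r => if r < s then v r else w (r - s)) ∈ S.ctrl := by
  refine ⟨Measurable.ite (measurableSet_lt measurable_id measurable_const) hv.1
    (hw.1.comp (measurable_sub_const s)), fun r => ?_⟩
  dsimp only
  split_ifs
  exacts [hv.2 r, hw.2 (r - s)]

theorem reach_subset_reach {x y : Fin d → ℝ} (hy : y ∈ S.reach x) : S.reach y ⊆ S.reach x := by
  obtain ⟨v, hv, s, hs, rfl⟩ := hy
  rintro _ ⟨w, hw, t, ht, rfl⟩
  have hvw := piecewise_mem_ctrl hv hw s
  refine ⟨_, hvw, s + t, add_nonneg hs ht, ?_⟩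
  rw [φ_add hvw x hs ht, φ_eq_of_eqOn hvw hv x (fun r hr => if_pos hr.2) ⟨hs, le_rfl⟩]
  exact φ_eq_of_eqOn (shift_mem_ctrl hvw s) hw _
    (fun r hr => by simp [not_lt.2 (le_add_of_nonneg_right hr.1.le)]) ⟨ht, le_rfl⟩

theorem closure_reach_subset_closure_reach {x y : Fin d → ℝ} (hy : y ∈ closure (S.reach x)) :
    closure (S.reach y) ⊆ closure (S.reach x) := by
  refine closure_minimal ?_ isClosed_closure
  rintro _ ⟨v, hv, t, ht, rfl⟩
  exact map_mem_closure (f := fun z => S.φ z v t) (continuous_φ_apply hv ht) hy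
    fun z hz => reach_subset_reach hz ⟨v, hv, t, ht, rfl⟩

theorem reach_subset_of_posInv {M : Set (Fin d → ℝ)} (hM : S.posInv M) {x : Fin d → ℝ}
    (hx : x ∈ M) : S.reach x ⊆ M := by
  rintro _ ⟨v, hv, t, ht, rfl⟩
  exact hM x hx v hv t ht

theorem piecewiseConst_comp_floor {h : ℝ} (hh : 0 < h) (F : ℤ → Fin m → ℝ) :
    PiecewiseConst fun t => F ⌊t / h⌋ := by
  refine ⟨fun n => n * h, by simp, fun a b hab => mul_lt_mul_of_pos_right (Nat.cast_lt.2 hab) hh,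
    tendsto_natCast_atTop_atTop.atTop_mul_const hh, fun n t ht => ?_⟩
  have hfloor : ⌊t / h⌋ = n := by
    rw [Int.floor_eq_iff, le_div_iff₀ hh, div_lt_iff₀ hh]
    push_cast
    exact ⟨ht.1, by exact_mod_cast ht.2⟩
  simp [hfloor, hh.ne']

theorem exists_piecewiseConst_forall_dist_le {V : Set (Fin m → ℝ)} (hV : IsCompact V)
    (hVne : V.Nonempty) (g : ℝ → Fin m → ℝ) {h : ℝ} (hh : 0 < h) :
    ∃ u : ℝ → Fin m → ℝ, Measurable u ∧ (∀ t, u t ∈ V) ∧ PiecewiseConst u ∧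
      ∀ s, ∀ c ∈ V, dist c (u s) ≤ 2 * dist c (g (h * ⌊s / h⌋)) := by
  have hproj : ∀ y, ∃ p ∈ V, ∀ c ∈ V, dist y p ≤ dist y c := fun y => by
    obtain ⟨p, hp, hpy⟩ := hV.exists_infDist_eq_dist hVne y
    exact ⟨p, hp, fun c hc => hpy ▸ Metric.infDist_le_dist_of_mem hc⟩
  choose p hpV hp using hproj
  exact ⟨fun t => p (g (h * ⌊t / h⌋)),
    (measurable_from_top (f := fun k : ℤ => p (g (h * k)))).comp
      (Int.measurable_floor.comp (measurable_id.div_const h)),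
    fun t => hpV _, piecewiseConst_comp_floor hh (fun k => p (g (h * k))),
    fun s c hc => dist_le_two_mul_dist_of_forall_dist_le (hp _) hc⟩

theorem exists_piecewiseConst_integral_norm_sub_le {V : Set (Fin m → ℝ)} (hV : IsCompact V)
    {v : ℝ → Fin m → ℝ} (hv : Measurable v) (hvV : ∀ t, v t ∈ V) {T δ : ℝ} (hT : 0 ≤ T)
    (hδ : 0 < δ) : ∃ u : ℝ → Fin m → ℝ, Measurable u ∧ (∀ t, u t ∈ V) ∧ PiecewiseConst u ∧
      ∫ s in (0:ℝ)..T, ‖v s - u s‖ ≤ δ := by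
  -- Approximate `v` in L¹ by a continuous `g`, sample `g` on a grid finer than its modulus of
  -- continuity `η`, and move each sample to a nearest point of `V`.
  set ε : ℝ := δ / (4 * T + 4)
  have hε : 0 < ε := by positivity
  have hvT := intervalIntegrable_of_isCompact_range_subset hV hv hvV 0 T
  obtain ⟨g, hg_supp, hg_int, hg_cont, -⟩ :=
    hvT.1.exists_hasCompactSupport_integral_sub_le (div_pos hδ four_pos)
  obtain ⟨η, hη, hgη⟩ :=
    Metric.uniformContinuous_iff.1 (hg_supp.uniformContinuous_of_continuous hg_cont) ε hε
  obtain ⟨u, hu, huV, hu_pc, hvu⟩ :=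
    exists_piecewiseConst_forall_dist_le hV ⟨v 0, hvV 0⟩ g (half_pos hη)
  have hpoint : ∀ s, ‖v s - u s‖ ≤ 2 * ‖v s - g s‖ + 2 * ε := fun s => by
    have hgs := hgη ((dist_mul_floor_div_lt (half_pos hη) s).trans (half_lt_self hη))
    calc ‖v s - u s‖ = dist (v s) (u s) := (dist_eq_norm _ _).symm
      _ ≤ 2 * (dist (v s) (g s) + ε) := (hvu s (v s) (hvV s)).trans (by
          gcongr
          exact (dist_triangle _ _ _).trans (add_le_add le_rfl hgs.le))
      _ = 2 * ‖v s - g s‖ + 2 * ε := by rw [dist_eq_norm]; ring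
  refine ⟨u, hu, huV, hu_pc, ?_⟩
  have hvg : IntervalIntegrable (fun s => ‖v s - g s‖) volume 0 T :=
    (hvT.sub (hg_cont.intervalIntegrable 0 T)).norm
  have hεT : ε * (4 * T + 4) = δ := div_mul_cancel₀ _ (by positivity)
  calc ∫ s in (0:ℝ)..T, ‖v s - u s‖
      ≤ ∫ s in (0:ℝ)..T, (2 * ‖v s - g s‖ + 2 * ε) :=
        intervalIntegral.integral_mono_on hT
          (hvT.sub (intervalIntegrable_of_isCompact_range_subset hV hu huV 0 T)).norm
          ((hvg.const_mul 2).add intervalIntegrable_const) fun s _ => hpoint s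
    _ = 2 * (∫ s in Ioc 0 T, ‖v s - g s‖) + 2 * ε * T := by
        rw [intervalIntegral.integral_add (hvg.const_mul 2) intervalIntegrable_const,
          intervalIntegral.integral_const_mul, intervalIntegral.integral_const,
          intervalIntegral.integral_of_le hT, sub_zero, smul_eq_mul]
        ring
    _ ≤ δ := by linarith

theorem closure_reach_subset_closure_reachPC (x : Fin d → ℝ) :
    closure (S.reach x) ⊆ closure (S.reachPC x) := by
  refine closure_minimal ?_ isClosed_closure
  rintro _ ⟨v, hv, T, hT, rfl⟩
  rw [Metric.mem_closure_iff]
  intro ε hε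
  obtain ⟨K, hK⟩ := S.exists_lipschitzWith_field
  obtain ⟨C, hC⟩ := (isCompact_Icc (a := 0) (b := T)).exists_bound_of_continuousOn
    (f := fun s => ∑ i, ‖S.f i (S.φ x v s)‖) (continuous_finsetSum _ fun i _ =>
      ((S.continuous_f i).comp (S.φ_cont x v)).norm).continuousOn
  have hC0 : 0 ≤ C := (norm_nonneg _).trans (hC 0 ⟨le_rfl, hT⟩)
  set δ := ε / ((C + 1) * Real.exp (K * T))
  have hδ : 0 < δ := by positivity
  obtain ⟨u, hu_meas, huV, hu_pc, hvu⟩ :=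
    exists_piecewiseConst_integral_norm_sub_le S.V_compact hv.1 hv.2 hT hδ
  have hu : u ∈ S.ctrl := ⟨hu_meas, huV⟩
  refine ⟨S.φ x u T, ⟨u, hu, hu_pc, T, hT, rfl⟩, ?_⟩
  have hdefect : ∫ s in (0:ℝ)..T, ‖S.field (u s) (S.φ x v s) - S.field (v s) (S.φ x v s)‖
      ≤ C * δ := by
    refine (intervalIntegral.integral_mono_on hT
      ((intervalIntegrable_field hu (S.φ_cont x v) 0 T).sub
        (intervalIntegrable_field hv (S.φ_cont x v) 0 T)).norm
      (((intervalIntegrable_of_mem_ctrl hv 0 T).sub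
        (intervalIntegrable_of_mem_ctrl hu 0 T)).norm.const_mul C) fun s hs => ?_).trans ?_
    · refine (S.norm_field_sub_field_le _ _ _).trans ?_
      rw [norm_sub_rev, mul_comm]
      exact mul_le_mul_of_nonneg_right ((le_abs_self _).trans (hC s hs)) (norm_nonneg _)
    · rw [intervalIntegral.integral_const_mul]
      exact mul_le_mul_of_nonneg_left hvu hC0
  have := norm_sub_le_of_isSolutionOn hK hu hv (S.φ_cont x u) (S.φ_cont x v)
    (isSolutionOn_φ hu x T) (isSolutionOn_φ hv x T) T ⟨hT, le_rfl⟩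
  rw [S.φ_init, S.φ_init, sub_self, norm_zero, zero_add] at this
  rw [dist_eq_norm, norm_sub_rev]
  calc _ ≤ C * δ * Real.exp (K * T) :=
        this.trans (mul_le_mul_of_nonneg_right hdefect (Real.exp_pos _).le)
    _ = C / (C + 1) * ε := by simp only [δ]; field_simp
    _ < ε := mul_lt_of_lt_one_left hε ((div_lt_one (by linarith)).2 (lt_add_one C))

def IsMinimalSet (S : CAS d m) (A : Set (Fin d → ℝ)) : Prop :=
  A.Nonempty ∧ IsClosed A ∧ ∀ x ∈ A, closure (S.reach x) = A

theorem ctrl_nonempty_of_locAccAt {x : Fin d → ℝ} (hx : S.locAccAt x) : S.ctrl.Nonempty := by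
  obtain ⟨⟨y, hy, -⟩, -⟩ := hx 1 one_pos univ Filter.univ_mem
  obtain ⟨v, hv, -⟩ := interior_subset hy
  exact ⟨v, hv⟩

theorem mem_reach_self (hS : S.ctrl.Nonempty) (x : Fin d → ℝ) : x ∈ S.reach x :=
  let ⟨v, hv⟩ := hS
  ⟨v, hv, 0, le_rfl, S.φ_init x v⟩

theorem isCompact_closure_reach {M : Set (Fin d → ℝ)} (hMc : IsCompact M) (hM : S.posInv M)
    {x : Fin d → ℝ} (hx : x ∈ M) : IsCompact (closure (S.reach x)) :=
  hMc.of_isClosed_subset isClosed_closure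
    (closure_minimal (reach_subset_of_posInv hM hx) hMc.isClosed)

theorem isOpen_setOf_inter_reach_nonempty {U : Set (Fin d → ℝ)} (hU : IsOpen U) :
    IsOpen {x | (U ∩ S.reach x).Nonempty} := by
  refine isOpen_iff_mem_nhds.2 fun x ⟨_, hqU, v, hv, t, ht, hq⟩ => ?_
  subst hq
  exact Filter.mem_of_superset
    ((continuous_φ_apply hv ht).continuousAt.preimage_mem_nhds (hU.mem_nhds hqU))
    fun y hy => ⟨_, hy, v, hv, t, ht, rfl⟩

theorem exists_isMinimalSet_subset_closure_reach (hS : S.ctrl.Nonempty) {x : Fin d → ℝ}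
    (hx : IsCompact (closure (S.reach x))) :
    ∃ A, S.IsMinimalSet A ∧ A ⊆ closure (S.reach x) := by
  set F := {B | ∃ z ∈ closure (S.reach x), B = closure (S.reach z)}
  have hF : ∀ B ∈ F, B.Nonempty ∧ IsClosed B ∧ B ⊆ closure (S.reach x) := by
    rintro _ ⟨z, hz, rfl⟩
    exact ⟨⟨z, subset_closure (mem_reach_self hS z)⟩, isClosed_closure,
      closure_reach_subset_closure_reach hz⟩
  have hchain : ∀ c ⊆ F, IsChain (· ⊆ ·) c → c.Nonempty → ∃ lb ∈ F, ∀ B ∈ c, lb ⊆ B := by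
    rintro c hcF hc ⟨B₀, hB₀⟩
    have : Nonempty c := ⟨⟨B₀, hB₀⟩⟩
    obtain ⟨z, hz⟩ := IsCompact.nonempty_sInter_of_directed_nonempty_isCompact_isClosed
      (fun B₁ h₁ B₂ h₂ => (hc.total h₁ h₂).elim (fun h => ⟨B₁, h₁, subset_rfl, h⟩)
        fun h => ⟨B₂, h₂, h, subset_rfl⟩)
      (fun B hB => (hF B (hcF hB)).1)
      (fun B hB => hx.of_isClosed_subset (hF B (hcF hB)).2.1 (hF B (hcF hB)).2.2)
      (fun B hB => (hF B (hcF hB)).2.1)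
    refine ⟨closure (S.reach z), ⟨z, (hF B₀ (hcF hB₀)).2.2 (hz B₀ hB₀), rfl⟩, fun B hB => ?_⟩
    obtain ⟨y, -, rfl⟩ := hcF hB
    exact closure_reach_subset_closure_reach (hz _ hB)
  obtain ⟨A, hAx, hAmin⟩ := zorn_superset_nonempty F hchain _
    ⟨x, subset_closure (mem_reach_self hS x), rfl⟩
  obtain ⟨hAne, hAcl, -⟩ := hF A hAmin.prop
  obtain ⟨w, -, rfl⟩ := hAmin.prop
  exact ⟨_, ⟨hAne, hAcl, fun u hu => hAmin.eq_of_le ⟨u, hAx hu, rfl⟩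
    (closure_reach_subset_closure_reach hu)⟩, hAx⟩

namespace IsMinimalSet

variable {A B : Set (Fin d → ℝ)}

theorem reach_subset (hA : S.IsMinimalSet A) {x : Fin d → ℝ} (hx : x ∈ A) : S.reach x ⊆ A :=
  hA.2.2 x hx ▸ subset_closure

theorem subset_closure_reach (hA : S.IsMinimalSet A) {x q : Fin d → ℝ} (hqA : q ∈ A)
    (hq : q ∈ S.reach x) : A ⊆ closure (S.reach x) :=
  hA.2.2 q hqA ▸ closure_mono (reach_subset_reach hq)

theorem eq_of_inter_nonempty (hA : S.IsMinimalSet A) (hB : S.IsMinimalSet B)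
    (h : (A ∩ B).Nonempty) : A = B := by
  obtain ⟨x, hxA, hxB⟩ := h
  rw [← hA.2.2 x hxA, hB.2.2 x hxB]

theorem interior_nonempty (hA : S.IsMinimalSet A) {x : Fin d → ℝ} (hxA : x ∈ A)
    (hx : S.locAccAt x) : (interior A).Nonempty := by
  obtain ⟨⟨y, hy, -⟩, -⟩ := hx 1 one_pos univ Filter.univ_mem
  refine ⟨y, interior_mono (fun z hz => hA.reach_subset hxA ?_) hy⟩
  obtain ⟨v, hv, t, ht, rfl⟩ := hz
  exact ⟨v, hv, t, ht.1, rfl⟩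

theorem controlSetProps (hS : S.ctrl.Nonempty) (hA : S.IsMinimalSet A) :
    S.controlSetProps A := by
  obtain ⟨v, hv⟩ := hS
  exact ⟨fun x hx => ⟨v, hv, fun t ht => hA.reach_subset hx ⟨v, hv, t, ht, rfl⟩⟩,
    fun x hx => (hA.2.2 x hx).symm.subset⟩

theorem isInvControlSet (hS : S.ctrl.Nonempty) (hA : S.IsMinimalSet A) :
    S.isInvControlSet A := by
  refine ⟨⟨hA.1, hA.controlSetProps hS, fun D hAD hD => ?_⟩, fun x hx => ?_⟩
  · obtain ⟨x, hx⟩ := hA.1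
    exact (hA.2.2 x hx ▸ hD.2 x (hAD hx)).antisymm hAD
  · rw [hA.2.1.closure_eq, hA.2.2 x hx]

end IsMinimalSet

variable {M : Set (Fin d → ℝ)}

theorem exists_isMinimalSet_interior_inter_reach (hMc : IsCompact M) (hM : S.posInv M)
    (hacc : S.locAccOn M) {x : Fin d → ℝ} (hx : x ∈ M) :
    ∃ A, S.IsMinimalSet A ∧ A ⊆ M ∧ (interior A ∩ S.reach x).Nonempty := by
  have hxM : closure (S.reach x) ⊆ M := closure_minimal (reach_subset_of_posInv hM hx) hMc.isClosed
  obtain ⟨A, hA, hAx⟩ := exists_isMinimalSet_subset_closure_reach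
    (ctrl_nonempty_of_locAccAt (hacc x hx)) (isCompact_closure_reach hMc hM hx)
  obtain ⟨a, haA⟩ := hA.1
  obtain ⟨p, hp⟩ := hA.interior_nonempty haA (hacc a (hxM (hAx haA)))
  exact ⟨A, hA, hAx.trans hxM,
    mem_closure_iff.1 (hAx (interior_subset hp)) _ isOpen_interior hp⟩

theorem isInvControlSet.isMinimalSet (hMc : IsCompact M) (hM : S.posInv M)
    (hacc : S.locAccOn M) {C : Set (Fin d → ℝ)} (hC : S.isInvControlSet C) (hCM : C ⊆ M) :
    S.IsMinimalSet C := by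
  obtain ⟨⟨⟨x₀, hx₀⟩, -, hCmax⟩, hCinv⟩ := hC
  have hclM : closure C ⊆ M := closure_minimal hCM hMc.isClosed
  have hmin : S.IsMinimalSet (closure C) := by
    refine ⟨⟨x₀, subset_closure hx₀⟩, isClosed_closure, fun y hy => ?_⟩
    rw [hCinv x₀ hx₀] at hy ⊢
    refine (closure_reach_subset_closure_reach hy).antisymm ?_
    obtain ⟨A, hA, -, q, hqA, hqy⟩ := exists_isMinimalSet_interior_inter_reach hMc hM hacc
      (hclM (hCinv x₀ hx₀ ▸ hy))
    have hqC : q ∈ closure C :=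
      hCinv x₀ hx₀ ▸ closure_reach_subset_closure_reach hy (subset_closure hqy)
    obtain ⟨c, hcA, hcC⟩ := mem_closure_iff.1 hqC _ isOpen_interior hqA
    rw [← hCinv x₀ hx₀, hCinv c hcC, hA.2.2 c (interior_subset hcA)]
    exact hA.subset_closure_reach (interior_subset hqA) hqy
  have hCcl : closure C = C := hCmax _ subset_closure
    (hmin.controlSetProps (ctrl_nonempty_of_locAccAt (hacc x₀ (hCM hx₀))))
  exact hCcl ▸ hmin

theorem finite_setOf_isMinimalSet (hMc : IsCompact M) (hM : S.posInv M) (hacc : S.locAccOn M) :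
    {A | S.IsMinimalSet A ∧ A ⊆ M}.Finite := by
  obtain ⟨t, ht⟩ := hMc.elim_finite_subcover
    (fun A : {A | S.IsMinimalSet A ∧ A ⊆ M} => {x | (interior A.1 ∩ S.reach x).Nonempty})
    (fun A => isOpen_setOf_inter_reach_nonempty isOpen_interior)
    (fun x hx => by
      obtain ⟨A, hA, hAM, hAx⟩ := exists_isMinimalSet_interior_inter_reach hMc hM hacc hx
      exact mem_iUnion.2 ⟨⟨A, hA, hAM⟩, hAx⟩)
  refine (t.finite_toSet.image Subtype.val).subset fun A ⟨hA, hAM⟩ => ?_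
  obtain ⟨a, haA⟩ := hA.1
  obtain ⟨B, hBt, q, hqB, hqa⟩ := mem_iUnion₂.1 (ht (hAM haA))
  exact ⟨B, hBt, (hA.eq_of_inter_nonempty B.2.1
    ⟨q, hA.reach_subset haA hqa, interior_subset hqB⟩).symm⟩

end CAS

/-- A nonempty compact positively invariant and locally accessible
set `M` contains at least one and at most finitely many invariant control sets; each
of them is compact with nonempty interior, and every `x ∈ M` can be steered by a
piecewise constant control into the interior of one of them. -/
theorem stmt11 {d m : ℕ} (S : CAS d m) (M : Set (Fin d → ℝ))
    (hMc : IsCompact M) (hMne : M.Nonempty) (hM : S.posInv M) (hacc : S.locAccOn M) :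
    {C : Set (Fin d → ℝ) | S.isInvControlSet C ∧ C ⊆ M}.Nonempty ∧
    {C : Set (Fin d → ℝ) | S.isInvControlSet C ∧ C ⊆ M}.Finite ∧
    (∀ C, S.isInvControlSet C → C ⊆ M → IsCompact C ∧ (interior C).Nonempty) ∧
    ∀ x ∈ M, ∃ C, S.isInvControlSet C ∧ C ⊆ M ∧
      (interior C ∩ S.reachPC x).Nonempty := by
  obtain ⟨x₀, hx₀⟩ := hMne
  have hS := CAS.ctrl_nonempty_of_locAccAt (hacc x₀ hx₀)
  have hset : {C | S.isInvControlSet C ∧ C ⊆ M} = {A | S.IsMinimalSet A ∧ A ⊆ M} :=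
    Set.ext fun C => ⟨fun ⟨hC, hCM⟩ => ⟨hC.isMinimalSet hMc hM hacc hCM, hCM⟩,
      fun ⟨hA, hAM⟩ => ⟨hA.isInvControlSet hS, hAM⟩⟩
  have hreachPC : ∀ x ∈ M, ∃ C, S.isInvControlSet C ∧ C ⊆ M ∧
      (interior C ∩ S.reachPC x).Nonempty := fun x hx => by
    obtain ⟨A, hA, hAM, q, hqA, hqx⟩ :=
      CAS.exists_isMinimalSet_interior_inter_reach hMc hM hacc hx
    exact ⟨A, hA.isInvControlSet hS, hAM, mem_closure_iff.1
      (CAS.closure_reach_subset_closure_reachPC x (subset_closure hqx)) _ isOpen_interior hqA⟩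
  refine ⟨?_, hset ▸ CAS.finite_setOf_isMinimalSet hMc hM hacc, fun C hC hCM => ?_, hreachPC⟩
  · obtain ⟨C, hC, hCM, -⟩ := hreachPC x₀ hx₀
    exact ⟨C, hC, hCM⟩
  · have hmin := hC.isMinimalSet hMc hM hacc hCM
    obtain ⟨c, hc⟩ := hmin.1
    exact ⟨hMc.of_isClosed_subset hmin.2.1 hCM,
      hmin.interior_nonempty hc (hacc c (hCM hc))⟩
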